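/- Let n = 2k+1 with k ≥ 2. The dynamics of the canonical positive cycle of size n under the block-parallel schedule μ_odd = {(0,...,k-1),(k,k+1,2k,2k-1,...,k+2)} has exactly 2^k fixed points. -/
import Mathlib

/-- Update of the configuration `x` of the BAN `f` on the block `W` of automata. -/
def upd {n : ℕ} (f : (Fin n → Bool) → Fin n → Bool) (W : Finset (Fin n))
    (x : Fin n → Bool) : Fin n → Bool :=
  fun i => if i ∈ W then f x i else x i

/-- Dynamics of `f` under the sequence of blocks `Ws`, applied left to right. -/
def run {n : ℕ} (f : (Fin n → Bool) → Fin n → Bool) (Ws : List (Finset (Fin n)))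
    (x : Fin n → Bool) : Fin n → Bool :=
  Ws.foldl (fun y W => upd f W y) x

/-- The canonical positive cycle BAN of size `n`: `f_i(x) = x_{(i-1) mod n}`. -/
def posCycle (n : ℕ) (x : Fin n → Bool) (i : Fin n) : Bool :=
  x ⟨(i.val + n - 1) % n, Nat.mod_lt _ i.pos⟩

/-- The `m`-th element (0-indexed) of the o-block `(k, k+1, 2k, 2k-1, …, k+2)`. -/
def oddSeq (k m : ℕ) : ℕ :=
  if m = 0 then k else if m = 1 then k + 1 else 2 * k + 2 - m

/-- Sequentialization of `μ_odd = {(0,1,…,k-1), (k,k+1,2k,2k-1,…,k+2)}` on the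
positive cycle of size `n = 2k+1`: `ℓ = k(k+1)` blocks, the `t`-th block
(0-indexed) being `{t mod k, oddSeq k (t mod (k+1))}`. -/
def oddBlocks (k : ℕ) (hk : 2 ≤ k) : List (Finset (Fin (2 * k + 1))) :=
  (List.range (k * (k + 1))).map (fun t =>
    { ⟨t % k, by have := Nat.mod_lt t (show 0 < k by omega); omega⟩,
      ⟨oddSeq k (t % (k + 1)), by
        have h1 : t % (k + 1) < k + 1 := Nat.mod_lt t (by omega)
        unfold oddSeq
        split
        · omega
        · split <;> omega⟩ })

/-! ### Auxiliary development -/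

/-- Predecessor on the cycle of size `2k+1`, on natural-number positions. -/
def predk (k p : ℕ) : ℕ := if p = 0 then 2 * k else p - 1

/-- Position `p` belongs to the `t`-th block. -/
def inW (k t p : ℕ) : Prop := p = t % k ∨ p = oddSeq k (t % (k + 1))

instance (k t p : ℕ) : Decidable (inW k t p) := by unfold inW oddSeq; infer_instance

/-- Backward index trace: `psi k t p` is the original position whose value
sits at position `p` after the first `t` blocks. -/
def psi (k : ℕ) : ℕ → ℕ → ℕ
  | 0, p => p
  | t + 1, p => if inW k t p then psi k t (predk k p) else psi k t p

lemma psi_upd {k t p : ℕ} (h : inW k t p) : psi k (t + 1) p = psi k t (predk k p) := by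
  simp [psi, h]

lemma psi_skip {k t p : ℕ} (h : ¬ inW k t p) : psi k (t + 1) p = psi k t p := by
  simp [psi, h]

/-- Two numbers with the same residue differ by at least `M`. -/
lemma gapM {M a b : ℕ} (hM : 0 < M) (hab : a < b) (h : a % M = b % M) : a + M ≤ b := by
  have h1 : M ∣ b - a := (Nat.modEq_iff_dvd' hab.le).mp h
  have h2 : M ≤ b - a := Nat.le_of_dvd (by omega) h1
  omega

lemma modv (M c r : ℕ) (h : r < M) : (M * c + r) % M = r := by
  rw [Nat.mul_add_mod, Nat.mod_eq_of_lt h]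

lemma res_le {M a r : ℕ} (h : a % M = r) : r ≤ a := by
  have := Nat.mod_le a M; omega

lemma succMod {M u r : ℕ} (h : u % M = r) (h2 : r + 1 < M) : (u + 1) % M = r + 1 := by
  have h3 := Nat.div_add_mod u M
  have h4 : u + 1 = M * (u / M) + (r + 1) := by omega
  rw [h4, modv _ _ _ h2]

lemma subkMod {k u : ℕ} (h : k ≤ u) : (u - k) % (k + 1) = (u + 1) % (k + 1) := by
  have : u + 1 = (u - k) + (k + 1) := by omega
  rw [this, Nat.add_mod_right]

/-- If `p` is not updated in `[t1, t2)` then `psi` is unchanged. -/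
lemma psi_no {k : ℕ} (p : ℕ) : ∀ d t1, (∀ s, t1 ≤ s → s < t1 + d → ¬ inW k s p) →
    psi k (t1 + d) p = psi k t1 p := by
  intro d
  induction d with
  | zero => intro t1 _; rfl
  | succ d ih =>
    intro t1 h
    have : t1 + (d + 1) = (t1 + d) + 1 := by omega
    rw [this, psi_skip (h _ (by omega) (by omega))]
    exact ih t1 (fun s hs1 hs2 => h s hs1 (by omega))

lemma psi_no' {k : ℕ} (p t1 t2 : ℕ) (h12 : t1 ≤ t2)
    (h : ∀ s, t1 ≤ s → s < t2 → ¬ inW k s p) : psi k t2 p = psi k t1 p := by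
  have : t2 = t1 + (t2 - t1) := by omega
  rw [this]
  exact psi_no p (t2 - t1) t1 (fun s hs1 hs2 => h s hs1 (by omega))

/-- The `o`-block residue of a high position. -/
def mu (k p : ℕ) : ℕ := if p = k then 0 else if p = k + 1 then 1 else 2 * k + 2 - p

lemma inW_low {k : ℕ} (hk : 2 ≤ k) {p : ℕ} (hp : p < k) (t : ℕ) :
    inW k t p ↔ t % k = p := by
  unfold inW oddSeq
  have hm : t % (k + 1) < k + 1 := Nat.mod_lt t (by omega)
  constructor
  · rintro (h | h)
    · omega
    · split at h
      · omega
      · split at h <;> omega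
  · intro h; left; omega

lemma inW_high {k : ℕ} (hk : 2 ≤ k) {p : ℕ} (hp1 : k ≤ p) (hp2 : p ≤ 2 * k) (t : ℕ) :
    inW k t p ↔ t % (k + 1) = mu k p := by
  unfold inW oddSeq mu
  have hm : t % (k + 1) < k + 1 := Nat.mod_lt t (by omega)
  have hkk : t % k < k := Nat.mod_lt t (by omega)
  set m := t % (k + 1) with hmdef
  constructor
  · rintro (h | h)
    · omega
    · by_cases hm0 : m = 0
      · rw [if_pos hm0] at h; subst h; simp [hm0]
      · by_cases hm1 : m = 1
        · rw [if_neg hm0, if_pos hm1] at h; subst h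
          rw [if_neg (by omega), if_pos rfl]; exact hm1
        · rw [if_neg hm0, if_neg hm1] at h
          rw [if_neg (by omega), if_neg (by omega)]; omega
  · intro h
    right
    by_cases h0 : p = k
    · subst h0; rw [if_pos rfl] at h; simp [h]
    · by_cases h1 : p = k + 1
      · subst h1; rw [if_neg h0, if_pos rfl] at h; simp [h]
      · rw [if_neg h0, if_neg h1] at h
        have hm0 : ¬ m = 0 := by omega
        have hm1 : ¬ m = 1 := by omega
        rw [if_neg hm0, if_neg hm1]; omega

lemma psi_le {k : ℕ} : ∀ t p, p ≤ 2 * k → psi k t p ≤ 2 * k := by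
  intro t
  induction t with
  | zero => intro p hp; exact hp
  | succ t ih =>
    intro p hp
    by_cases h : inW k t p
    · rw [psi_upd h]
      apply ih
      unfold predk
      split <;> omega
    · rw [psi_skip h]; exact ih p hp

/-! ### Descent lemmas -/

lemma lowDesc {k : ℕ} (hk : 2 ≤ k) (q : ℕ) :
    ∀ i, i < k → psi k (k * q + i + 1) i = psi k (k * q) (2 * k) := by
  intro i
  induction i with
  | zero =>
    intro _
    have hin : inW k (k * q) 0 := by
      rw [inW_low hk (by omega)]
      simp [Nat.mul_mod_right]
    rw [show k * q + 0 + 1 = (k * q) + 1 by omega, psi_upd hin]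
    unfold predk
    simp
  | succ i ih =>
    intro hi
    have hin : inW k (k * q + i + 1) (i + 1) := by
      rw [inW_low hk hi]
      have e : k * q + i + 1 = k * q + (i + 1) := by omega
      rw [e, modv k q (i + 1) hi]
    rw [show k * q + (i+1) + 1 = (k * q + i + 1) + 1 by omega, psi_upd hin]
    have hp : predk k (i + 1) = i := by unfold predk; simp
    rw [hp]
    exact ih (by omega)

lemma lastLow {k : ℕ} (hk : 2 ≤ k) (q i T : ℕ) (hi : i < k)
    (h1 : k * q + i < T) (h2 : T ≤ k * (q + 1) + i) :
    psi k T i = psi k (k * q) (2 * k) := by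
  have e1 : k * (q + 1) = k * q + k := by ring
  have h3 : psi k T i = psi k (k * q + i + 1) i := by
    apply psi_no' _ _ _ (by omega)
    intro s hs1 hs2 hin
    rw [inW_low hk hi] at hin
    have ha : (k * q + i) % k = i := modv k q i hi
    have := gapM (show 0 < k by omega) (show k * q + i < s by omega) (by rw [ha, hin])
    omega
  rw [h3, lowDesc hk q i hi]

lemma lowEval {k : ℕ} (hk : 2 ≤ k) (q r : ℕ) (hr : r < k) :
    psi k (k * (q + 1) + r) (k - 1) = psi k (k * q) (2 * k) := by
  have e1 : k * (q + 1) = k * q + k := by ring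
  exact lastLow hk q (k - 1) _ (by omega) (by omega) (by omega)

lemma highStep {k : ℕ} (hk : 2 ≤ k) {j u : ℕ} (h3 : 3 ≤ j) (hj : j ≤ k)
    (hu : u % (k + 1) = k + 2 - j) (hku : k ≤ u) :
    psi k (u + 1) (k + j) = psi k (u - k + 1) (k + j - 1) := by
  have hin : inW k u (k + j) := by
    rw [inW_high hk (by omega) (by omega)]
    unfold mu
    rw [if_neg (by omega), if_neg (by omega)]
    omega
  rw [psi_upd hin]
  have hp : predk k (k + j) = k + j - 1 := by unfold predk; rw [if_neg (by omega)]
  rw [hp]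
  apply psi_no' _ _ _ (by omega)
  intro s hs1 hs2 hin2
  rw [inW_high hk (by omega) (by omega)] at hin2
  have hmu : mu k (k + j - 1) = k + 3 - j := by
    unfold mu; rw [if_neg (by omega), if_neg (by omega)]; omega
  rw [hmu] at hin2
  have ha : (u - k) % (k + 1) = k + 3 - j := by
    rw [subkMod hku, succMod hu (by omega)]; omega
  have := gapM (show 0 < k + 1 by omega) (show u - k < s by omega) (by rw [ha, hin2])
  omega

lemma highChain {k : ℕ} (hk : 2 ≤ k) :
    ∀ e (j u : ℕ), j ≤ k → e + 2 ≤ j → u % (k + 1) = k + 2 - j → k * e ≤ u →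
    psi k (u + 1) (k + j) = psi k (u - k * e + 1) (k + j - e) := by
  intro e
  induction e with
  | zero => intro j u _ _ _ _; simp
  | succ e ih =>
    intro j u hj hej hu hku
    have e1 : k * (e + 1) = k * e + k := by ring
    have hk1 : k ≤ u := by omega
    rw [highStep hk (by omega) hj hu hk1]
    have hjj : k + j - 1 = k + (j - 1) := by omega
    rw [hjj]
    have hu' : (u - k) % (k + 1) = k + 2 - (j - 1) := by
      rw [subkMod hk1, succMod hu (by omega)]; omega
    have hku' : k * e ≤ u - k := by omega
    rw [ih (j - 1) (u - k) (by omega) (by omega) hu' hku']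
    congr 1
    · omega
    · omega

lemma hs21 {k : ℕ} (hk : 2 ≤ k) {u : ℕ} (hu : u % (k + 1) = k) :
    psi k (u + 1) (k + 2) = psi k (u - k) (k - 1) := by
  have hku : k ≤ u := res_le hu
  have h0 : (u + 1) % (k + 1) = 0 := by
    obtain ⟨d, hd⟩ : ∃ d, u + 1 = (k + 1) * d := by
      refine ⟨u / (k + 1) + 1, ?_⟩
      have h1 := Nat.div_add_mod u (k + 1)
      have e : (k + 1) * (u / (k + 1) + 1) = (k + 1) * (u / (k + 1)) + (k + 1) := by ring
      omega
    rw [hd]; exact Nat.mul_mod_right _ _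
  have hsub : (u - k) % (k + 1) = 0 := by rw [subkMod hku]; exact h0
  have ha1 : (u - k + 1) % (k + 1) = 1 := succMod hsub (by omega)
  have s1 : psi k (u + 1) (k + 2) = psi k u (k + 1) := by
    have hin : inW k u (k + 2) := by
      rw [inW_high hk (by omega) (by omega)]
      unfold mu; rw [if_neg (by omega), if_neg (by omega)]; omega
    rw [psi_upd hin]
    simp [predk]
  have s2 : psi k u (k + 1) = psi k (u - k + 1 + 1) (k + 1) := by
    apply psi_no' _ _ _ (by omega)
    intro s hs1 hs2 hin2
    rw [inW_high hk (by omega) (by omega)] at hin2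
    have hmu : mu k (k + 1) = 1 := by unfold mu; rw [if_neg (by omega), if_pos rfl]
    rw [hmu] at hin2
    have := gapM (show 0 < k + 1 by omega) (show u - k + 1 < s by omega)
      (by rw [ha1, hin2])
    omega
  have s3 : psi k (u - k + 1 + 1) (k + 1) = psi k (u - k + 1) k := by
    have hin : inW k (u - k + 1) (k + 1) := by
      rw [inW_high hk (by omega) (by omega)]
      unfold mu; rw [if_neg (by omega), if_pos rfl]; exact ha1
    rw [psi_upd hin]
    simp [predk]
  have s4 : psi k (u - k + 1) k = psi k (u - k) (k - 1) := by
    have hin : inW k (u - k) k := by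
      rw [inW_high hk (by omega) (by omega)]
      unfold mu; rw [if_pos rfl]; exact hsub
    rw [show u - k + 1 = (u - k) + 1 from rfl, psi_upd hin]
    congr 1
    unfold predk; rw [if_neg (by omega)]
  rw [s1, s2, s3, s4]

lemma mu2k {k : ℕ} (hk : 2 ≤ k) : mu k (2 * k) = 2 := by
  unfold mu; rw [if_neg (by omega), if_neg (by omega)]; omega

lemma gval {k : ℕ} (hk : 2 ≤ k) (q : ℕ) (hq : q + 2 ≤ k) :
    psi k (k * q) (2 * k) = 2 * k - q := by
  cases q with
  | zero => rw [Nat.mul_zero]; simp [psi]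
  | succ q' =>
    have e1 : k * (q' + 1) = k * q' + k := by ring
    have e2 : (k + 1) * q' = k * q' + q' := by ring
    have hu : ((k + 1) * q' + 2) % (k + 1) = 2 := modv _ _ _ (by omega)
    have step0 : psi k (k * (q' + 1)) (2 * k) = psi k ((k + 1) * q' + 2 + 1) (2 * k) := by
      apply psi_no' _ _ _ (by omega)
      intro s hs1 hs2 hin
      rw [inW_high hk (by omega) (by omega), mu2k hk] at hin
      have := gapM (show 0 < k + 1 by omega)
        (show (k + 1) * q' + 2 < s by omega) (by rw [hu, hin])
      omega
    rw [step0, show 2 * k = k + k by ring]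
    rw [highChain hk q' k ((k + 1) * q' + 2) (le_refl k) (by omega)
      (by rw [hu]; omega) (by omega)]
    rw [show (k + 1) * q' + 2 - k * q' + 1 = (q' + 2) + 1 by omega]
    have hin2 : inW k (q' + 2) (k + k - q') := by
      rw [inW_high hk (by omega) (by omega)]
      unfold mu
      rw [if_neg (by omega), if_neg (by omega), Nat.mod_eq_of_lt (by omega)]
      omega
    rw [psi_upd hin2]
    have e7 : predk k (k + k - q') = k + k - q' - 1 := by
      unfold predk; rw [if_neg (by omega)]
    rw [e7]
    have final : psi k (q' + 2) (k + k - q' - 1) = k + k - q' - 1 := by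
      have h := psi_no' (k := k) (k + k - q' - 1) 0 (q' + 2) (by omega) ?_
      · rw [h]; rfl
      · intro s hs1 hs2 hin
        rw [inW_high hk (by omega) (by omega)] at hin
        have hmu : mu k (k + k - q' - 1) = q' + 3 := by
          unfold mu; rw [if_neg (by omega), if_neg (by omega)]; omega
        rw [hmu] at hin
        have := res_le hin
        omega
    rw [final]
    omega

lemma gk {k : ℕ} (hk : 2 ≤ k) : psi k (k * k) (2 * k) = k - 1 := by
  obtain ⟨m, rfl⟩ : ∃ m, k = m + 2 := ⟨k - 2, by omega⟩
  have P1 : (m + 2) * (m + 2) = m * m + 4 * m + 4 := by ring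
  have P2 : (m + 2 + 1) * m = m * m + 3 * m := by ring
  have P3 : (m + 2) * m = m * m + 2 * m := by ring
  set k := m + 2 with hkdef
  have hu : (k * k - k) % (k + 1) = 2 := by
    rw [show k * k - k = (k + 1) * m + 2 by omega]
    exact modv _ _ _ (by omega)
  have step0 : psi k (k * k) (2 * k) = psi k (k * k - k + 1) (2 * k) := by
    apply psi_no' _ _ _ (by omega)
    intro s hs1 hs2 hin
    rw [inW_high hk (by omega) (by omega), mu2k hk] at hin
    have := gapM (show 0 < k + 1 by omega) (show k * k - k < s by omega)
      (by rw [hu, hin])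
    omega
  rw [step0, show 2 * k = k + k by ring]
  rw [highChain hk m k (k * k - k) (le_refl k) (by omega) (by rw [hu]; omega)
    (by omega)]
  rw [show k * k - k - k * m + 1 = k + 1 by omega]
  rw [show k + k - m = k + 2 by omega]
  have hkk : k % (k + 1) = k := Nat.mod_eq_of_lt (by omega)
  rw [hs21 hk hkk, show k - k = 0 by omega]
  rfl

lemma lowK1 {k : ℕ} (hk : 2 ≤ k) : psi k (k * k - 1) (k - 1) = k + 2 := by
  obtain ⟨m, rfl⟩ : ∃ m, k = m + 2 := ⟨k - 2, by omega⟩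
  have P1 : (m + 2) * (m + 2) = m * m + 4 * m + 4 := by ring
  have P2 : (m + 2) * (m + 1) = m * m + 3 * m + 2 := by ring
  have P3 : (m + 2) * m = m * m + 2 * m := by ring
  set k := m + 2 with hkdef
  have h := lowEval hk m (k - 1) (by omega)
  rw [show k * k - 1 = k * (m + 1) + (k - 1) by omega]
  rw [h, gval hk m (by omega)]
  omega

lemma kkA {k : ℕ} (hk : 2 ≤ k) : psi k (k * k) k = k + 2 := by
  have h1 : (k * k - 1) % (k + 1) = 0 := by
    obtain ⟨m, rfl⟩ : ∃ m, k = m + 2 := ⟨k - 2, by omega⟩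
    have P1 : (m + 2) * (m + 2) = m * m + 4 * m + 4 := by ring
    have P3 : (m + 2 + 1) * (m + 1) = m * m + 4 * m + 3 := by ring
    rw [show (m + 2) * (m + 2) - 1 = (m + 2 + 1) * (m + 1) + 0 by omega]
    exact modv _ _ _ (by omega)
  have h4 : 2 * 2 ≤ k * k := Nat.mul_le_mul hk hk
  have hin : inW k (k * k - 1) k := by
    rw [inW_high hk (le_refl k) (by omega)]
    rw [show mu k k = 0 from by unfold mu; rw [if_pos rfl]]
    exact h1
  rw [show k * k = (k * k - 1) + 1 by omega, psi_upd hin]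
  rw [show predk k k = k - 1 from by unfold predk; rw [if_neg (by omega)]]
  exact lowK1 hk

theorem psi_final {k : ℕ} (hk : 2 ≤ k) (p : ℕ) (hp : p ≤ 2 * k) :
    psi k (k * (k + 1)) p = if p < k then k - 1 else if p ≤ k + 2 then k + 2 else p := by
  obtain ⟨m, rfl⟩ : ∃ m, k = m + 2 := ⟨k - 2, by omega⟩
  have Q1 : (m + 2) * (m + 2) = m * m + 4 * m + 4 := by ring
  have Q2 : (m + 2) * (m + 2 + 1) = m * m + 5 * m + 6 := by ring
  have Q3 : (m + 2 + 1) * (m + 1) = m * m + 4 * m + 3 := by ring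
  have Q4 : (m + 2) * m = m * m + 2 * m := by ring
  have Q5 : (m + 2 + 1) * (m + 2 + 1) = m * m + 6 * m + 9 := by ring
  set k := m + 2 with hkdef
  by_cases h1 : p < k
  · rw [if_pos h1]
    rw [lastLow hk k p _ h1 (by omega) (by omega)]
    exact gk hk
  · rw [if_neg h1]
    by_cases h2 : p ≤ k + 2
    · rw [if_pos h2]
      have hcase : p = k ∨ p = k + 1 ∨ p = k + 2 := by omega
      have hmod0 : (k * k - 1) % (k + 1) = 0 := by
        rw [show k * k - 1 = (k + 1) * (m + 1) + 0 by omega]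
        exact modv _ _ _ (by omega)
      have hmod1 : (k * k) % (k + 1) = 1 := by
        rw [show k * k = (k + 1) * (m + 1) + 1 by omega]
        exact modv _ _ _ (by omega)
      rcases hcase with rfl | rfl | rfl
      · have step : psi k (k * (k + 1)) k = psi k (k * k) k := by
          apply psi_no' _ _ _ (by omega)
          intro s hs1 hs2 hin
          rw [inW_high hk (le_refl k) (by omega)] at hin
          rw [show mu k k = 0 from by unfold mu; rw [if_pos rfl]] at hin
          have := gapM (show 0 < k + 1 by omega) (show k * k - 1 < s by omega)
            (by rw [hmod0, hin])
          omega
        rw [step]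
        exact kkA hk
      · have step : psi k (k * (k + 1)) (k + 1) = psi k (k * k + 1) (k + 1) := by
          apply psi_no' _ _ _ (by omega)
          intro s hs1 hs2 hin
          rw [inW_high hk (by omega) (by omega)] at hin
          rw [show mu k (k + 1) = 1 from by
            unfold mu; rw [if_neg (by omega), if_pos rfl]] at hin
          have := gapM (show 0 < k + 1 by omega) (show k * k < s by omega)
            (by rw [hmod1, hin])
          omega
        rw [step]
        have hin : inW k (k * k) (k + 1) := by
          rw [inW_high hk (by omega) (by omega)]
          rw [show mu k (k + 1) = 1 from by
            unfold mu; rw [if_neg (by omega), if_pos rfl]]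
          exact hmod1
        rw [show k * k + 1 = (k * k) + 1 from rfl, psi_upd hin]
        rw [show predk k (k + 1) = k from by
          unfold predk; rw [if_neg (by omega)]; omega]
        exact kkA hk
      · have hmodk : (k * (k + 1) - 1) % (k + 1) = k := by
          rw [show k * (k + 1) - 1 = (k + 1) * (m + 1) + k by omega]
          exact modv _ _ _ (by omega)
        rw [show k * (k + 1) = (k * (k + 1) - 1) + 1 by omega]
        rw [hs21 hk hmodk]
        rw [show k * (k + 1) - 1 - k = k * k - 1 by omega]
        exact lowK1 hk
    · rw [if_neg h2]
      obtain ⟨j, rfl⟩ : ∃ j, p = k + j := ⟨p - k, by omega⟩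
      have hj3 : 3 ≤ j := by omega
      have hjk : j ≤ k := by omega
      have hu : (k * k + k + 1 - j) % (k + 1) = k + 2 - j := by
        rw [show k * k + k + 1 - j = (k + 1) * (m + 1) + (k + 2 - j) by omega]
        exact modv _ _ _ (by omega)
      have step : psi k (k * (k + 1)) (k + j) = psi k ((k * k + k + 1 - j) + 1) (k + j) := by
        apply psi_no' _ _ _ (by omega)
        intro s hs1 hs2 hin
        rw [inW_high hk (by omega) (by omega)] at hin
        rw [show mu k (k + j) = k + 2 - j from by
          unfold mu; rw [if_neg (by omega), if_neg (by omega)]; omega] at hin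
        have := gapM (show 0 < k + 1 by omega) (show k * k + k + 1 - j < s by omega)
          (by rw [hu, hin])
        omega
      rw [step]
      have hmul : k * (j - 2) ≤ k * m := Nat.mul_le_mul (le_refl k) (by omega)
      rw [highChain hk (j - 2) j (k * k + k + 1 - j) hjk (by omega) hu (by omega)]
      rw [show k + j - (j - 2) = k + 2 by omega]
      have E1 : (k + 1) * (k + 1 - j) + (k + 1) * j = (k + 1) * (k + 1) := by
        rw [← Nat.mul_add]; congr 1; omega
      have E3 : (k + 1) * j = k * j + j := by ring
      have E4 : k * (j - 2) + k * 2 = k * j := by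
        rw [← Nat.mul_add]; congr 1; omega
      have hv : (k * k + k + 1 - j - k * (j - 2)) % (k + 1) = k := by
        rw [show k * k + k + 1 - j - k * (j - 2) = (k + 1) * (k + 1 - j) + k by omega]
        exact modv _ _ _ (by omega)
      rw [hs21 hk hv]
      have hle := lowEval hk (k - j) (k + 1 - j) (by omega)
      have E5 : k * ((k - j) + 1) = k * (k - j) + k := by rw [Nat.mul_succ]
      have E6 : (k + 1) * (k + 1 - j) = k * (k + 1 - j) + (k + 1 - j) := by
        rw [Nat.succ_mul]
      have E7 : k * (k + 1 - j) = k * ((k - j) + 1) := by congr 1; omega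
      rw [show k * k + k + 1 - j - k * (j - 2) - k = k * ((k - j) + 1) + (k + 1 - j) by omega]
      rw [hle, gval hk (k - j) (by omega)]
      omega

/-! ### Bridge to `run` -/

def blk (k : ℕ) (hk : 2 ≤ k) (t : ℕ) : Finset (Fin (2 * k + 1)) :=
  { ⟨t % k, by have := Nat.mod_lt t (show 0 < k by omega); omega⟩,
    ⟨oddSeq k (t % (k + 1)), by
      have h1 : t % (k + 1) < k + 1 := Nat.mod_lt t (by omega)
      unfold oddSeq
      split
      · omega
      · split <;> omega⟩ }

lemma oddBlocks_eq (k : ℕ) (hk : 2 ≤ k) :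
    oddBlocks k hk = (List.range (k * (k + 1))).map (blk k hk) := rfl

lemma mem_blk {k : ℕ} (hk : 2 ≤ k) (t : ℕ) (i : Fin (2 * k + 1)) :
    i ∈ blk k hk t ↔ inW k t i.val := by
  unfold blk inW
  simp [Finset.mem_insert, Finset.mem_singleton, Fin.ext_iff]

lemma predVal {k : ℕ} (i : ℕ) (hi : i < 2 * k + 1) :
    (i + (2 * k + 1) - 1) % (2 * k + 1) = predk k i := by
  unfold predk
  by_cases h : i = 0
  · subst h
    simp [Nat.mod_eq_of_lt]
  · rw [if_neg h]
    rw [show i + (2 * k + 1) - 1 = (i - 1) + (2 * k + 1) by omega, Nat.add_mod_right]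
    exact Nat.mod_eq_of_lt (by omega)

lemma psi_lt {k : ℕ} (t p : ℕ) (hp : p < 2 * k + 1) : psi k t p < 2 * k + 1 := by
  have := psi_le (k := k) t p (by omega); omega

lemma run_psi {k : ℕ} (hk : 2 ≤ k) (x : Fin (2 * k + 1) → Bool) :
    ∀ T (i : Fin (2 * k + 1)),
      run (posCycle (2 * k + 1)) ((List.range T).map (blk k hk)) x i
        = x ⟨psi k T i.val, psi_lt T i.val i.isLt⟩ := by
  intro T
  induction T with
  | zero =>
    intro i
    show x i = x ⟨psi k 0 i.val, _⟩
    congr 1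
  | succ T ih =>
    intro i
    set R := run (posCycle (2 * k + 1)) ((List.range T).map (blk k hk)) x with hR
    have hr : run (posCycle (2 * k + 1)) ((List.range (T + 1)).map (blk k hk)) x
        = upd (posCycle (2 * k + 1)) (blk k hk T) R := by
      unfold run
      rw [List.range_succ, List.map_append, List.foldl_append]
      rfl
    rw [hr]
    have hupd : upd (posCycle (2 * k + 1)) (blk k hk T) R i
        = if i ∈ blk k hk T then posCycle (2 * k + 1) R i else R i := rfl
    rw [hupd]
    by_cases h : i ∈ blk k hk T
    · rw [if_pos h]
      have hpc : posCycle (2 * k + 1) R i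
          = R ⟨(i.val + (2 * k + 1) - 1) % (2 * k + 1), Nat.mod_lt _ i.pos⟩ := rfl
      rw [hpc, ih ⟨(i.val + (2 * k + 1) - 1) % (2 * k + 1), Nat.mod_lt _ i.pos⟩]
      congr 1
      apply Fin.ext
      show psi k T ((i.val + (2 * k + 1) - 1) % (2 * k + 1)) = psi k (T + 1) i.val
      rw [predVal i.val i.isLt, psi_upd ((mem_blk hk T i).mp h)]
    · rw [if_neg h, ih i]
      congr 1
      apply Fin.ext
      show psi k T i.val = psi k (T + 1) i.val
      rw [psi_skip (fun hc => h ((mem_blk hk T i).mpr hc))]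

/-! ### Counting fixed points -/

theorem positive_cycle_odd_schedule_fixed_point_count (k : ℕ) (hk : 2 ≤ k) :
    Nat.card {x : Fin (2 * k + 1) → Bool //
        run (posCycle (2 * k + 1)) (oddBlocks k hk) x = x} = 2 ^ k := by
  classical
  -- the projection map on indices
  have hsig : ∀ i : Fin (2 * k + 1), psi k (k * (k + 1)) i.val =
      if i.val < k then k - 1 else if i.val ≤ k + 2 then k + 2 else i.val := by
    intro i
    exact psi_final hk i.val (by omega)
  set σ : Fin (2 * k + 1) → Fin (2 * k + 1) := fun i =>
    ⟨if i.val < k then k - 1 else if i.val ≤ k + 2 then k + 2 else i.val, by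
      split
      · omega
      · split
        · omega
        · omega⟩ with hσdef
  have hfix : ∀ x : Fin (2 * k + 1) → Bool,
      run (posCycle (2 * k + 1)) (oddBlocks k hk) x = x ↔ ∀ i, x (σ i) = x i := by
    intro x
    rw [oddBlocks_eq, funext_iff]
    constructor
    · intro h i
      have := h i
      rw [run_psi hk x (k * (k + 1)) i] at this
      rw [← this]
      congr 1
      apply Fin.ext
      exact (hsig i).symm
    · intro h i
      rw [run_psi hk x (k * (k + 1)) i]
      rw [← h i]
      congr 1
      apply Fin.ext
      exact hsig i
  -- the equivalence with Fin k → Bool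
  set emb : Fin k → Fin (2 * k + 1) := fun j =>
    ⟨if j.val = 0 then k - 1 else if j.val = 1 then k + 2 else k + 1 + j.val, by
      have := j.isLt
      split
      · omega
      · split <;> omega⟩ with hembdef
  set cls : Fin (2 * k + 1) → Fin k := fun i =>
    ⟨if i.val < k then 0 else if i.val ≤ k + 2 then 1 else i.val - k - 1, by
      have := i.isLt
      split
      · omega
      · split <;> omega⟩ with hclsdef
  have hclsσ : ∀ i, cls (σ i) = cls i := by
    intro i
    apply Fin.ext
    have := i.isLt
    simp only [hclsdef, hσdef]
    split_ifs <;> first | contradiction | omega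
  have hembcls : ∀ i, emb (cls i) = σ i := by
    intro i
    apply Fin.ext
    have := i.isLt
    simp only [hembdef, hclsdef, hσdef]
    split_ifs <;> first | contradiction | omega
  have hclsemb : ∀ j, cls (emb j) = j := by
    intro j
    apply Fin.ext
    have := j.isLt
    simp only [hembdef, hclsdef]
    split_ifs <;> first | contradiction | omega
  have e : {x : Fin (2 * k + 1) → Bool //
      run (posCycle (2 * k + 1)) (oddBlocks k hk) x = x} ≃ (Fin k → Bool) :=
    { toFun := fun x j => x.val (emb j)
      invFun := fun g => ⟨fun i => g (cls i), by
        rw [hfix]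
        intro i
        rw [hclsσ i]⟩
      left_inv := by
        intro x
        apply Subtype.ext
        funext i
        show x.val (emb (cls i)) = x.val i
        rw [hembcls i]
        exact ((hfix x.val).mp x.property) i
      right_inv := by
        intro g
        funext j
        show g (cls (emb j)) = g j
        rw [hclsemb j] }
  rw [Nat.card_congr e, Nat.card_eq_fintype_card]
  simp [Fintype.card_fun]
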